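/- arXiv:2504.11944 — 2 statements merged into one kernel-verified Lean document; each statement's English description precedes it below -/
import Mathlib

section
/- Model Gradient identity (finite-state version): Let V_m^θ be the unique fixed point of the Bellman operator T_θ V(s) = Σ_{a} μ(a|s) Σ_{s',r} P_θ(s',r|s,a)[r + γV(s')] on a finite MDP with P_θ positive and differentiable in a real parameter θ. Then ∇_θ V_m^θ(s) = Σ_{s'} d_θ(s,s') Σ_{a'} μ(a'|s') Σ_{s'',r'} P_θ(s'',r'|s',a') (r' + γ V_m^θ(s'')) ∇_θ log P_θ(s'',r'|s',a'), where d_θ(s,s') = Σ_{t=0}^∞ γ^t (P_θ^μ)^t(s,s') is the discounted occupancy. -/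
/-! Since `P_θ` is row-stochastic, `‖γ • P_θ‖ < 1` in the `ℓ∞` operator norm, so `1 - γ • P_θ` is
invertible and its Neumann series is the occupancy matrix `d_θ`. The Bellman equation
`V_θ = T_θ V_θ` is the linear system `(1 - γ • P_θ) V_θ = T_θ 0`, and Cramer's rule shows that its
solution is differentiable in `θ`. Differentiating the Bellman equation gives
`V' = g + γ • P_θ V'`, where `g` is `T_θ V_θ` with the kernel `p_θ` replaced by its derivative,
hence `V' = d_θ g`; finally `p' = p · (p' / p)` because `p > 0`. -/

open Matrix

theorem Matrix.isUnit_and_hasSum_geom_series_smul {n : Type*} [Fintype n] [DecidableEq n]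
    {P : Matrix n n ℝ} {γ : ℝ} (hP : ∀ i, ∑ j, |P i j| ≤ 1) (hγ : |γ| < 1) :
    IsUnit (1 - γ • P) ∧ HasSum (fun t : ℕ => γ ^ t • P ^ t) (1 - γ • P)⁻¹ := by
  let _ := Matrix.linftyOpNormedRing (n := n) (α := ℝ)
  let _ := Matrix.linftyOpNormedAlgebra (n := n) (R := ℝ) (α := ℝ)
  have hP_norm : ‖P‖ ≤ 1 := by
    rw [linfty_opNorm_def, NNReal.coe_le_one, Finset.sup_le_iff]
    intro i _
    rw [← NNReal.coe_le_one]
    push_cast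
    simpa only [Real.norm_eq_abs] using hP i
  have hnorm : ‖γ • P‖ < 1 :=
    calc ‖γ • P‖ ≤ ‖γ‖ * ‖P‖ := norm_smul_le γ P
      _ ≤ ‖γ‖ * 1 := by gcongr
      _ < 1 := by rwa [mul_one, Real.norm_eq_abs]
  refine ⟨isUnit_one_sub_of_norm_lt_one hnorm, ?_⟩
  rw [nonsing_inv_eq_ringInverse]
  have h := hasSum_geom_series_inverse _ hnorm
  simp only [smul_pow] at h
  exact h

theorem Matrix.eq_nonsing_inv_mulVec_of_eq_add {n α : Type*} [Fintype n] [DecidableEq n]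
    [CommRing α] {P : Matrix n n α} {γ : α} {v g : n → α} (hP : IsUnit (1 - γ • P))
    (hv : v = g + γ • P *ᵥ v) : v = (1 - γ • P)⁻¹ *ᵥ g := by
  have hg : (1 - γ • P) *ᵥ v = g := by
    rw [sub_mulVec, one_mulVec, smul_mulVec]
    nth_rw 1 [hv]
    abel
  rw [← hg, mulVec_mulVec, nonsing_inv_mul _ ((isUnit_iff_isUnit_det _).mp hP), one_mulVec]

section Differentiability

variable {𝕜 n : Type*} [NontriviallyNormedField 𝕜] [Fintype n] [DecidableEq n]
  {M : 𝕜 → Matrix n n 𝕜} {θ : 𝕜}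

theorem Matrix.differentiableAt_det (hM : ∀ i j, DifferentiableAt 𝕜 (fun t => M t i j) θ) :
    DifferentiableAt 𝕜 (fun t => (M t).det) θ := by
  simp only [det_apply']
  exact DifferentiableAt.fun_sum fun σ _ =>
    (DifferentiableAt.fun_finsetProd fun i _ => hM (σ i) i).const_mul _

theorem Matrix.differentiableAt_nonsing_inv_mulVec {c : 𝕜 → n → 𝕜}
    (hM : ∀ i j, DifferentiableAt 𝕜 (fun t => M t i j) θ)
    (hc : ∀ i, DifferentiableAt 𝕜 (fun t => c t i) θ) (hdet : (M θ).det ≠ 0) (i : n) :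
    DifferentiableAt 𝕜 (fun t => ((M t)⁻¹ *ᵥ c t) i) θ := by
  have hcramer : (fun t => ((M t)⁻¹ *ᵥ c t) i) =
      fun t => ((M t).det)⁻¹ * ((M t).updateCol i (c t)).det := by
    ext t
    rw [inv_def, smul_mulVec, ← cramer_eq_adjugate_mulVec, Pi.smul_apply, cramer_apply,
      smul_eq_mul, Ring.inverse_eq_inv']
  rw [hcramer]
  refine ((differentiableAt_det hM).inv hdet).mul (differentiableAt_det fun k l => ?_)
  by_cases hl : l = i
  · subst hl
    simpa only [updateCol_self] using hc k
  · simpa only [updateCol_ne hl] using hM k l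

end Differentiability

section MDP

variable {S A R : Type*} [Fintype A] [Fintype R] (μ : S → A → ℝ)

def transitionMatrix (q : S → A → S × R → ℝ) : Matrix S S ℝ :=
  Matrix.of fun s s' => ∑ a, μ s a * ∑ r, q s a (s', r)

variable {μ}

theorem transitionMatrix_nonneg {q : S → A → S × R → ℝ} (hμ : ∀ s a, 0 ≤ μ s a)
    (hq : ∀ s a x, 0 ≤ q s a x) (s s' : S) : 0 ≤ transitionMatrix μ q s s' :=
  Finset.sum_nonneg fun a _ =>
    mul_nonneg (hμ s a) (Finset.sum_nonneg fun r _ => hq s a (s', r))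

theorem hasDerivAt_transitionMatrix_apply {q : ℝ → S → A → S × R → ℝ}
    {q' : S → A → S × R → ℝ} {θ : ℝ}
    (hq : ∀ s a x, HasDerivAt (fun t => q t s a x) (q' s a x) θ) (s s' : S) :
    HasDerivAt (fun t => transitionMatrix μ (q t) s s') (transitionMatrix μ q' s s') θ :=
  HasDerivAt.fun_sum fun a _ => (HasDerivAt.fun_sum fun r _ => hq s a (s', r)).const_mul (μ s a)

variable [Fintype S]

theorem sum_transitionMatrix_apply {q : S → A → S × R → ℝ} (hμ : ∀ s, ∑ a, μ s a = 1)
    (hq : ∀ s a, ∑ x, q s a x = 1) (s : S) : ∑ s', transitionMatrix μ q s s' = 1 := by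
  simp only [transitionMatrix, of_apply]
  rw [Finset.sum_comm]
  simp only [← Finset.mul_sum, ← Fintype.sum_prod_type', hq, mul_one, hμ]

theorem sum_abs_transitionMatrix_apply {q : S → A → S × R → ℝ}
    (hμ0 : ∀ s a, 0 ≤ μ s a) (hμ1 : ∀ s, ∑ a, μ s a = 1)
    (hq0 : ∀ s a x, 0 ≤ q s a x) (hq1 : ∀ s a, ∑ x, q s a x = 1) (s : S) :
    ∑ s', |transitionMatrix μ q s s'| = 1 := by
  simp_rw [abs_of_nonneg (transitionMatrix_nonneg hμ0 hq0 s _)]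
  exact sum_transitionMatrix_apply hμ1 hq1 s

theorem transitionMatrix_mulVec_apply (q : S → A → S × R → ℝ) (v : S → ℝ) (s : S) :
    (transitionMatrix μ q *ᵥ v) s = ∑ a, μ s a * ∑ x : S × R, q s a x * v x.1 := by
  simp only [transitionMatrix, mulVec, dotProduct, of_apply, Fintype.sum_prod_type,
    Finset.sum_mul, Finset.mul_sum]
  rw [Finset.sum_comm]
  exact Finset.sum_congr rfl fun _ _ => Finset.sum_congr rfl fun _ _ =>
    Finset.sum_congr rfl fun _ _ => by ring

variable (μ) (γ : ℝ) (rew : R → ℝ)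

def bellmanOp (q : S → A → S × R → ℝ) (v : S → ℝ) (s : S) : ℝ :=
  ∑ a, μ s a * ∑ x : S × R, q s a x * (rew x.2 + γ * v x.1)

theorem bellmanOp_eq_add_smul_mulVec (q : S → A → S × R → ℝ) (v : S → ℝ) :
    bellmanOp μ γ rew q v = bellmanOp μ γ rew q 0 + γ • transitionMatrix μ q *ᵥ v := by
  ext s
  simp only [bellmanOp, Pi.add_apply, Pi.smul_apply, transitionMatrix_mulVec_apply,
    Pi.zero_apply, mul_zero, add_zero, smul_eq_mul, Finset.mul_sum, ← Finset.sum_add_distrib]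
  exact Finset.sum_congr rfl fun _ _ => Finset.sum_congr rfl fun _ _ => by ring

variable {μ γ rew}

theorem hasDerivAt_bellmanOp {q : ℝ → S → A → S × R → ℝ} {q' : S → A → S × R → ℝ} {θ : ℝ}
    (hq : ∀ s a x, HasDerivAt (fun t => q t s a x) (q' s a x) θ)
    {v : ℝ → S → ℝ} {v' : S → ℝ} (hv : ∀ s, HasDerivAt (fun t => v t s) (v' s) θ) (s : S) :
    HasDerivAt (fun t => bellmanOp μ γ rew (q t) (v t) s)
      (bellmanOp μ γ rew q' (v θ) s + γ * (transitionMatrix μ (q θ) *ᵥ v') s) θ := by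
  have h := HasDerivAt.fun_sum fun a (_ : a ∈ Finset.univ) =>
    (HasDerivAt.fun_sum fun x (_ : x ∈ Finset.univ) =>
      (hq s a x).mul (((hv x.1).const_mul γ).const_add (rew x.2))).const_mul (μ s a)
  refine h.congr_deriv ?_
  simp only [bellmanOp, transitionMatrix_mulVec_apply, Finset.mul_sum,
    ← Finset.sum_add_distrib]
  exact Finset.sum_congr rfl fun _ _ => Finset.sum_congr rfl fun _ _ => by ring

variable [DecidableEq S]

theorem eq_nonsing_inv_mulVec_of_eq_bellmanOp {q : S → A → S × R → ℝ} {v : S → ℝ}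
    (hq : IsUnit (1 - γ • transitionMatrix μ q)) (hv : v = bellmanOp μ γ rew q v) :
    v = (1 - γ • transitionMatrix μ q)⁻¹ *ᵥ bellmanOp μ γ rew q 0 :=
  eq_nonsing_inv_mulVec_of_eq_add hq (hv.trans (bellmanOp_eq_add_smul_mulVec μ γ rew q v))

variable {q : ℝ → S → A → S × R → ℝ} {q' : S → A → S × R → ℝ} {θ : ℝ} {v : ℝ → S → ℝ}

theorem differentiableAt_of_eq_bellmanOp
    (hq : ∀ s a x, HasDerivAt (fun t => q t s a x) (q' s a x) θ)
    (hunit : ∀ t, IsUnit (1 - γ • transitionMatrix μ (q t)))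
    (hv : ∀ t, v t = bellmanOp μ γ rew (q t) (v t)) (s : S) :
    DifferentiableAt ℝ (fun t => v t s) θ := by
  simp_rw [fun t => eq_nonsing_inv_mulVec_of_eq_bellmanOp (hunit t) (hv t)]
  refine differentiableAt_nonsing_inv_mulVec (fun i j => ?_) (fun i => ?_)
    ((isUnit_iff_isUnit_det _).mp (hunit θ)).ne_zero s
  · exact (differentiableAt_const _).sub
      ((hasDerivAt_transitionMatrix_apply hq i j).differentiableAt.const_mul γ)
  · exact (hasDerivAt_bellmanOp hq (v := fun _ => 0)
      (fun _ => hasDerivAt_const θ 0) i).differentiableAt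

theorem hasDerivAt_of_eq_bellmanOp
    (hq : ∀ s a x, HasDerivAt (fun t => q t s a x) (q' s a x) θ)
    (hunit : ∀ t, IsUnit (1 - γ • transitionMatrix μ (q t)))
    (hv : ∀ t, v t = bellmanOp μ γ rew (q t) (v t)) (s : S) :
    HasDerivAt (fun t => v t s)
      (((1 - γ • transitionMatrix μ (q θ))⁻¹ *ᵥ bellmanOp μ γ rew q' (v θ)) s) θ := by
  obtain ⟨D, hD⟩ : ∃ D : S → ℝ, ∀ s, HasDerivAt (fun t => v t s) (D s) θ :=
    ⟨_, fun s => (differentiableAt_of_eq_bellmanOp hq hunit hv s).hasDerivAt⟩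
  suffices D = bellmanOp μ γ rew q' (v θ) + γ • transitionMatrix μ (q θ) *ᵥ D by
    rw [← eq_nonsing_inv_mulVec_of_eq_add (hunit θ) this]
    exact hD s
  ext s
  have h := hasDerivAt_bellmanOp (μ := μ) (γ := γ) (rew := rew) hq hD s
  simp only [← hv] at h
  exact (hD s).unique h

end MDP

theorem model_gradient_identity_general
    {S A R : Type*} [Fintype S] [DecidableEq S] [Fintype A] [Fintype R]
    (γ : ℝ) (hγ0 : 0 ≤ γ) (hγ1 : γ < 1)
    (μ : S → A → ℝ) (hμ0 : ∀ s a, 0 ≤ μ s a) (hμ1 : ∀ s, ∑ a, μ s a = 1)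
    (rew : R → ℝ)
    (p p' : ℝ → S → A → S × R → ℝ)
    (hpos : ∀ θ s a x, 0 < p θ s a x)
    (hsum : ∀ θ s a, ∑ x, p θ s a x = 1)
    (hder : ∀ θ s a x, HasDerivAt (fun t => p t s a x) (p' θ s a x) θ)
    (Vm : ℝ → S → ℝ)
    (hVm : ∀ θ s, Vm θ s =
      ∑ a, μ s a * ∑ x : S × R, p θ s a x * (rew x.2 + γ * Vm θ x.1))
    (Pμ : ℝ → Matrix S S ℝ)
    (hPμ : ∀ θ s s', Pμ θ s s' = ∑ a, μ s a * ∑ r : R, p θ s a (s', r))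
    (d : ℝ → S → S → ℝ)
    (hd : ∀ θ s s', d θ s s' = ∑' t : ℕ, γ ^ t * (Pμ θ ^ t) s s')
    (θ : ℝ) (s : S) :
    HasDerivAt (fun t => Vm t s)
      (∑ s', d θ s s' * ∑ a', μ s' a' *
        ∑ x : S × R,
          p θ s' a' x * (rew x.2 + γ * Vm θ x.1) * (p' θ s' a' x / p θ s' a' x)) θ := by
  have hneumann t := isUnit_and_hasSum_geom_series_smul
    (fun i => (sum_abs_transitionMatrix_apply hμ0 hμ1 (fun s a x => (hpos t s a x).le)
      (hsum t) i).le)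
    (abs_lt.mpr ⟨by linarith, hγ1⟩)
  have hd_eq s' : d θ s s' = (1 - γ • transitionMatrix μ (p θ))⁻¹ s s' := by
    rw [hd, show Pμ θ = transitionMatrix μ (p θ) from Matrix.ext (hPμ θ)]
    exact (Pi.hasSum.mp (Pi.hasSum.mp (hneumann θ).2 s) s').tsum_eq
  have hscore s' a' x : p θ s' a' x * (rew x.2 + γ * Vm θ x.1) * (p' θ s' a' x / p θ s' a' x)
      = p' θ s' a' x * (rew x.2 + γ * Vm θ x.1) := by
    field_simp [(hpos θ s' a' x).ne']
  refine (hasDerivAt_of_eq_bellmanOp (hder θ) (fun t => (hneumann t).1)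
    (fun t => funext (hVm t)) s).congr_deriv ?_
  simp only [mulVec, dotProduct, hd_eq, hscore, bellmanOp]

/-- Model Gradient identity (finite-state version). -/
theorem model_gradient_identity
    {S A R : Type*} [Fintype S] [DecidableEq S] [Nonempty S] [Fintype A] [Fintype R]
    (γ : ℝ) (hγ0 : 0 ≤ γ) (hγ1 : γ < 1)
    (μ : S → A → ℝ) (hμ0 : ∀ s a, 0 ≤ μ s a) (hμ1 : ∀ s, ∑ a, μ s a = 1)
    (rew : R → ℝ)
    (p p' : ℝ → S → A → S × R → ℝ)
    (hpos : ∀ θ s a x, 0 < p θ s a x)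
    (hsum : ∀ θ s a, ∑ x, p θ s a x = 1)
    (hder : ∀ θ s a x, HasDerivAt (fun t => p t s a x) (p' θ s a x) θ)
    (Vm : ℝ → S → ℝ)
    (hVm : ∀ θ s, Vm θ s =
      ∑ a, μ s a * ∑ x : S × R, p θ s a x * (rew x.2 + γ * Vm θ x.1))
    (Pμ : ℝ → Matrix S S ℝ)
    (hPμ : ∀ θ s s', Pμ θ s s' = ∑ a, μ s a * ∑ r : R, p θ s a (s', r))
    (d : ℝ → S → S → ℝ)
    (hd : ∀ θ s s', d θ s s' = ∑' t : ℕ, γ ^ t * (Pμ θ ^ t) s s')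
    (θ : ℝ) (s : S) :
    HasDerivAt (fun t => Vm t s)
      (∑ s', d θ s s' * ∑ a', μ s' a' *
        ∑ x : S × R,
          p θ s' a' x * (rew x.2 + γ * Vm θ x.1) * (p' θ s' a' x / p θ s' a' x)) θ :=
  model_gradient_identity_general γ hγ0 hγ1 μ hμ0 hμ1 rew p p' hpos hsum hder Vm hVm Pμ hPμ d hd θ s
end

section
/- Value error bound from model error: if two Bellman operators T₁, T₂ under the same policy μ differ only in their transition matrices P₁, P₂ and reward vectors r₁, r₂, with ‖r₁ − r₂‖_∞ ≤ ε_r and max_s Σ_{s'} |P₁(s'|s) − P₂(s'|s)| ≤ ε_P, then their fixed points satisfy ‖V₁ − V₂‖_∞ ≤ (ε_r + γ ε_P ‖V₂‖_∞)/(1 − γ). -/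
/-- Value error bound from model (reward and transition) error. -/
theorem value_error_from_model_error {S : Type*} [Fintype S] [Nonempty S]
    (γ εr εP : ℝ) (hγ0 : 0 ≤ γ) (hγ1 : γ < 1)
    (P₁ P₂ : Matrix S S ℝ)
    (hP₁0 : ∀ s s', 0 ≤ P₁ s s') (hP₁1 : ∀ s, ∑ s', P₁ s s' = 1)
    (hP₂0 : ∀ s s', 0 ≤ P₂ s s') (hP₂1 : ∀ s, ∑ s', P₂ s s' = 1)
    (r₁ r₂ : S → ℝ) (hr : ‖r₁ - r₂‖ ≤ εr)
    (hP : ∀ s, ∑ s', |P₁ s s' - P₂ s s'| ≤ εP)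
    (V₁ V₂ : S → ℝ)
    (hV₁ : ∀ s, V₁ s = r₁ s + γ * P₁.mulVec V₁ s)
    (hV₂ : ∀ s, V₂ s = r₂ s + γ * P₂.mulVec V₂ s) :
    ‖V₁ - V₂‖ ≤ (εr + γ * εP * ‖V₂‖) / (1 - γ) := by
  set D := ‖V₁ - V₂‖ with hD
  have hεr : 0 ≤ εr := le_trans (norm_nonneg _) hr
  have hεP : 0 ≤ εP := by
    have s := Classical.arbitrary S
    exact le_trans (Finset.sum_nonneg fun _ _ => abs_nonneg _) (hP s)
  have hD0 : 0 ≤ D := norm_nonneg _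
  have hV2 : 0 ≤ ‖V₂‖ := norm_nonneg _
  have hkey : D ≤ εr + γ * D + γ * (εP * ‖V₂‖) := by
    rw [hD]
    apply pi_norm_le_iff_of_nonneg (by positivity) |>.2
    intro s
    have hb1 : ∀ s', |V₁ s' - V₂ s'| ≤ D := fun s' => by
      have := norm_le_pi_norm (V₁ - V₂) s'
      simpa using this
    have hb2 : ∀ s', |V₂ s'| ≤ ‖V₂‖ := fun s' => by
      have := norm_le_pi_norm V₂ s'
      simpa using this
    have hre : |r₁ s - r₂ s| ≤ εr := by
      have := norm_le_pi_norm (r₁ - r₂) s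
      simp only [Pi.sub_apply, Real.norm_eq_abs] at this
      linarith
    have head : (V₁ - V₂) s = (r₁ s - r₂ s) + γ * (∑ s', P₁ s s' * (V₁ s' - V₂ s'))
        + γ * (∑ s', (P₁ s s' - P₂ s s') * V₂ s') := by
      simp only [Pi.sub_apply, hV₁ s, hV₂ s, Matrix.mulVec, dotProduct]
      simp only [mul_sub, sub_mul, Finset.mul_sum, Finset.sum_sub_distrib]
      ring
    have h1 : |∑ s', P₁ s s' * (V₁ s' - V₂ s')| ≤ D := by
      calc |∑ s', P₁ s s' * (V₁ s' - V₂ s')| ≤ ∑ s', |P₁ s s' * (V₁ s' - V₂ s')| :=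
            Finset.abs_sum_le_sum_abs _ _
        _ ≤ ∑ s', P₁ s s' * D := by
            apply Finset.sum_le_sum
            intro s' _
            rw [abs_mul, abs_of_nonneg (hP₁0 s s')]
            exact mul_le_mul_of_nonneg_left (hb1 s') (hP₁0 s s')
        _ = D := by rw [← Finset.sum_mul, hP₁1 s, one_mul]
    have h2 : |∑ s', (P₁ s s' - P₂ s s') * V₂ s'| ≤ εP * ‖V₂‖ := by
      calc |∑ s', (P₁ s s' - P₂ s s') * V₂ s'| ≤ ∑ s', |(P₁ s s' - P₂ s s') * V₂ s'| :=
            Finset.abs_sum_le_sum_abs _ _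
        _ ≤ ∑ s', |P₁ s s' - P₂ s s'| * ‖V₂‖ := by
            apply Finset.sum_le_sum
            intro s' _
            rw [abs_mul]
            exact mul_le_mul_of_nonneg_left (hb2 s') (abs_nonneg _)
        _ = (∑ s', |P₁ s s' - P₂ s s'|) * ‖V₂‖ := by rw [Finset.sum_mul]
        _ ≤ εP * ‖V₂‖ := mul_le_mul_of_nonneg_right (hP s) hV2
    have := abs_add_three (r₁ s - r₂ s) (γ * (∑ s', P₁ s s' * (V₁ s' - V₂ s')))
        (γ * (∑ s', (P₁ s s' - P₂ s s') * V₂ s'))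
    rw [← head] at this
    simp only [Real.norm_eq_abs, abs_mul, abs_of_nonneg hγ0] at *
    nlinarith [mul_le_mul_of_nonneg_left h1 hγ0, mul_le_mul_of_nonneg_left h2 hγ0]
  rw [le_div_iff₀ (by linarith)]
  nlinarith
end
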